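/- The function d_ν(x,y) := |x−y|/(ν+x+y) defines a metric on the nonnegative reals [0,∞) for every fixed ν > 0; that is, d_ν is symmetric, vanishes exactly on the diagonal, and satisfies the triangle inequality on [0,∞). -/

import Mathlib

/-! Shifting both points by `ν / 2` turns `d_ν` into the relative distance `|u - v| / (u + v)` on
`(0, ∞)`. For `a ≤ b` its value only grows when the interval `[a, b]` is enlarged, which gives the
triangle inequality when the middle point lies outside the outer two. When `u ≤ v ≤ w`, the sum
`d(u, v) + d(v, w)` equals `2v(w - u) / ((u + v)(v + w))`, and `(u + v)(v + w) ≤ 2v(u + w)`. -/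

noncomputable def dnu (ν x y : ℝ) : ℝ := |x - y| / (ν + x + y)

noncomputable def relDist (u v : ℝ) : ℝ := |u - v| / (u + v)

theorem relDist_comm (u v : ℝ) : relDist u v = relDist v u := by
  rw [relDist, relDist, abs_sub_comm, add_comm]

theorem relDist_nonneg {u v : ℝ} (hu : 0 ≤ u) (hv : 0 ≤ v) : 0 ≤ relDist u v :=
  div_nonneg (abs_nonneg _) (add_nonneg hu hv)

theorem relDist_eq_zero_iff {u v : ℝ} (huv : 0 < u + v) : relDist u v = 0 ↔ u = v := by
  rw [relDist, div_eq_zero_iff, abs_eq_zero, sub_eq_zero, or_iff_left huv.ne']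

theorem relDist_of_le {u v : ℝ} (h : u ≤ v) : relDist u v = (v - u) / (u + v) := by
  rw [relDist, abs_sub_comm, abs_of_nonneg (sub_nonneg.2 h)]

theorem relDist_le_relDist_of_subinterval {a b c d : ℝ} (hc : 0 < c) (hca : c ≤ a) (hab : a ≤ b)
    (hbd : b ≤ d) : relDist a b ≤ relDist c d := by
  rw [relDist_of_le hab, relDist_of_le (hca.trans (hab.trans hbd)),
    div_le_div_iff₀ (by linarith) (by linarith)]
  nlinarith [mul_le_mul hca hbd (by linarith : (0:ℝ) ≤ b) (by linarith : (0:ℝ) ≤ a)]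

theorem relDist_le_add_of_between {u v w : ℝ} (hu : 0 < u) (huv : u ≤ v) (hvw : v ≤ w) :
    relDist u w ≤ relDist u v + relDist v w := by
  rw [relDist_of_le huv, relDist_of_le hvw, relDist_of_le (huv.trans hvw)]
  have hu_v : 0 < u + v := by linarith
  have hv_w : 0 < v + w := by linarith
  calc (w - u) / (u + w) ≤ 2 * v * (w - u) / ((u + v) * (v + w)) := by
        rw [div_le_div_iff₀ (by linarith) (mul_pos hu_v hv_w)]
        nlinarith [mul_nonneg (sub_nonneg.2 (huv.trans hvw))
          (mul_nonneg (sub_nonneg.2 huv) (sub_nonneg.2 hvw))]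
    _ = (v - u) / (u + v) + (w - v) / (v + w) := by
        field_simp
        ring

theorem relDist_triangle {u v w : ℝ} (hu : 0 < u) (hv : 0 < v) (hw : 0 < w) :
    relDist u w ≤ relDist u v + relDist v w := by
  wlog huw : u ≤ w generalizing u w
  · rw [relDist_comm, add_comm, relDist_comm u, relDist_comm v]
    exact this hw hu (le_of_not_ge huw)
  rcases le_total v u with hvu | huv
  · have := relDist_le_relDist_of_subinterval hv hvu huw le_rfl
    linarith [relDist_nonneg hu.le hv.le, relDist_comm u v]
  rcases le_total v w with hvw | hwv
  · exact relDist_le_add_of_between hu huv hvw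
  · have := relDist_le_relDist_of_subinterval hu le_rfl huw hwv
    linarith [relDist_nonneg hv.le hw.le]

theorem dnu_eq_relDist (ν x y : ℝ) : dnu ν x y = relDist (x + ν / 2) (y + ν / 2) := by
  rw [dnu, relDist, add_sub_add_right_eq_sub]
  ring

theorem dnu_is_metric_on_nonneg (ν : ℝ) (hν : 0 < ν) :
    (∀ x y : ℝ, 0 ≤ x → 0 ≤ y → dnu ν x y = dnu ν y x) ∧
    (∀ x y : ℝ, 0 ≤ x → 0 ≤ y → (dnu ν x y = 0 ↔ x = y)) ∧
    (∀ x y z : ℝ, 0 ≤ x → 0 ≤ y → 0 ≤ z →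
      dnu ν x z ≤ dnu ν x y + dnu ν y z) := by
  have shift_pos : ∀ x : ℝ, 0 ≤ x → 0 < x + ν / 2 := fun x hx => by linarith
  refine ⟨fun x y _ _ => ?_, fun x y hx hy => ?_, fun x y z hx hy hz => ?_⟩
  · rw [dnu_eq_relDist, dnu_eq_relDist, relDist_comm]
  · rw [dnu_eq_relDist, relDist_eq_zero_iff (add_pos (shift_pos x hx) (shift_pos y hy)),
      add_left_inj]
  · simp only [dnu_eq_relDist]
    exact relDist_triangle (shift_pos x hx) (shift_pos y hy) (shift_pos z hz)
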